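/- arXiv:2410.11483 — 6 statements merged into one kernel-verified Lean document; each statement's English description precedes it below -/
import Mathlib

section
/- (Mixed estimate.) Let t0 ≤ a ≤ b ≤ d be real numbers, let c : [a,d] → ℝ be of class C² with Λ1 ≤ c(t) ≤ Λ2 for all t ∈ [a,d] (where 0 < Λ1 ≤ Λ2), let c∞ ∈ [Λ1,Λ2], let γ be a continuous non-negative function on [a,b] with |c'(t)| ≤ γ(t) and |c''(t)| ≤ γ(t)² on [a,b], and let λ > 0 satisfy λ ≥ (1/2)|c'(t)|/c(t)^{3/2} for every t ∈ [a,b]. Then every solution u of u''(t) + λ² c(t) u(t) = 0 on [a,d] satisfies, for the Kowaleskian energy E(t) = u'(t)²/√c∞ + λ²√c∞·u(t)², the inequality E(d) ≤ (3Λ2/Λ1)·E(a)·exp( ((2Λ1+3)/(4Λ1^{5/2}))·(1/λ)·∫_a^b γ(τ)² dτ + (λ/Λ1^{1/2})·∫_b^d |c(τ) − c∞| dτ ). -/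
open Real Set MeasureTheory

/-- The Kowaleskian energy `E(t) = u'(t)²/√c∞ + λ²·√c∞·u(t)²`. -/
noncomputable def kowE (cinf lam : ℝ) (u u' : ℝ → ℝ) (t : ℝ) : ℝ :=
  (u' t) ^ 2 / Real.sqrt cinf + lam ^ 2 * Real.sqrt cinf * (u t) ^ 2

/-! On `[a, b]` the Tarama energy `T` is comparable to the local energy
`G = u'²/√c + λ²√c u²`: the bound `λ ≥ |c'|/(2c^{3/2})` and AM-GM `2λ|u'u| ≤ G` give
`G/2 ≤ T ≤ 3G/2`. Along solutions the correction term of `T` cancels the `c'`-part of `G'`, so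
`T'` only involves `c''` and `c'²` and is at most `K γ² |u'u| ≤ (K/λ) γ² T` with
`K = (2Λ1 + 3)/(4Λ1^{5/2})`; Gronwall gives `T(b) ≤ T(a) exp((K/λ) ∫ γ²)`. On `[b, d]` the
Kowaleskian energy satisfies `E' = 2λ²(c∞ - c) u'u/√c∞ ≤ (λ/√Λ1) |c - c∞| E`, and Gronwall
applies again. Passing between `E`, `G` and `T` at `a` and `b` costs `√(Λ2/Λ1)` twice and
`2 · 3/2`. -/

theorem le_mul_exp_integral_of_hasDerivWithinAt_le_mul {x y : ℝ} (hxy : x ≤ y)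
    {F F' φ : ℝ → ℝ} (hF : ∀ t ∈ Icc x y, HasDerivWithinAt F (F' t) (Icc x y) t)
    (hφ : ContinuousOn φ (Icc x y)) (hF' : ∀ t ∈ Ioo x y, F' t ≤ φ t * F t) :
    F y ≤ F x * exp (∫ τ in x..y, φ τ) := by
  set Φ : ℝ → ℝ := fun t => ∫ τ in x..t, φ τ
  have hΦ_cont : ContinuousOn Φ (Icc x y) := by
    have h := intervalIntegral.continuousOn_primitive_interval (a := x) (b := y)
      (μ := volume) (by rw [uIcc_of_le hxy]; exact hφ.integrableOn_Icc)
    rwa [uIcc_of_le hxy] at h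
  have hΦ_deriv : ∀ t ∈ Ioo x y, HasDerivAt Φ (φ t) t := fun t ht =>
    intervalIntegral.integral_hasDerivAt_right
      (ContinuousOn.intervalIntegrable_of_Icc ht.1.le (hφ.mono (Icc_subset_Icc_right ht.2.le)))
      (hφ.mono Ioo_subset_Icc_self |>.stronglyMeasurableAtFilter isOpen_Ioo t ht)
      ((hφ.mono Ioo_subset_Icc_self).continuousAt (Ioo_mem_nhds ht.1 ht.2))
  -- `F · exp (-Φ)` is antitone, since its derivative is `(F' - φ F) exp (-Φ) ≤ 0`.
  have h_anti : AntitoneOn (fun t => F t * exp (-Φ t)) (Icc x y) := by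
    refine antitoneOn_of_hasDerivWithinAt_nonpos (convex_Icc x y)
      (ContinuousOn.mul (fun t ht => (hF t ht).continuousWithinAt) hΦ_cont.neg.rexp)
      (f' := fun t => (F' t - φ t * F t) * exp (-Φ t)) (fun t ht => ?_) (fun t ht => ?_)
    · rw [interior_Icc] at ht ⊢
      have hFt := (hF t (Ioo_subset_Icc_self ht)).hasDerivAt (Icc_mem_nhds ht.1 ht.2)
      exact ((hFt.mul (hΦ_deriv t ht).neg.exp).congr_deriv
        (by simp only [Pi.neg_apply]; ring)).hasDerivWithinAt
    · rw [interior_Icc] at ht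
      exact mul_nonpos_of_nonpos_of_nonneg (by linarith [hF' t ht]) (exp_pos _).le
  have h := h_anti (left_mem_Icc.2 hxy) (right_mem_Icc.2 hxy) hxy
  simp only [Φ, intervalIntegral.integral_same, neg_zero, exp_zero, mul_one] at h
  rwa [exp_neg, ← div_eq_mul_inv, div_le_iff₀ (exp_pos _)] at h

lemma rpow_add_half {x : ℝ} (hx : 0 < x) (y : ℝ) : x ^ (y + 1 / 2) = x ^ y * √x := by
  rw [rpow_add hx, sqrt_eq_rpow]

noncomputable def oscEnergy (w lam p q : ℝ) : ℝ := p ^ 2 / √w + lam ^ 2 * √w * q ^ 2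

lemma two_mul_abs_mul_le_oscEnergy {w : ℝ} (hw : 0 < w) (lam p q : ℝ) :
    2 * lam * |p * q| ≤ oscEnergy w lam p q := by
  have hs : 0 < √w := sqrt_pos.2 hw
  unfold oscEnergy
  rw [div_add' _ _ _ hs.ne', le_div_iff₀ hs, abs_mul, ← sq_abs p, ← sq_abs q]
  nlinarith [sq_nonneg (|p| - lam * √w * |q|)]

lemma oscEnergy_le_mul_oscEnergy {Λ1 Λ2 w w' : ℝ} (hΛ1 : 0 < Λ1) (hw : w ∈ Icc Λ1 Λ2)
    (hw' : w' ∈ Icc Λ1 Λ2) (lam p q : ℝ) :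
    oscEnergy w lam p q ≤ √Λ2 / √Λ1 * oscEnergy w' lam p q := by
  have hm : 0 < √Λ1 := sqrt_pos.2 hΛ1
  have hw'_pos : 0 < √w' := sqrt_pos.2 (hΛ1.trans_le hw'.1)
  have h_inv : 1 / √w ≤ √Λ2 / √Λ1 * (1 / √w') := by
    rw [div_mul_div_comm, mul_one, div_le_div_iff₀ (hm.trans_le (sqrt_le_sqrt hw.1))
      (mul_pos hm hw'_pos), one_mul]
    exact (mul_le_mul (sqrt_le_sqrt hw.1) (sqrt_le_sqrt hw'.2) hw'_pos.le
      (sqrt_nonneg _)).trans_eq (mul_comm _ _)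
  have h_lin : √w ≤ √Λ2 / √Λ1 * √w' := by
    rw [div_mul_eq_mul_div, le_div_iff₀ hm]
    exact mul_le_mul (sqrt_le_sqrt hw.2) (sqrt_le_sqrt hw'.1) hm.le (sqrt_nonneg _)
  unfold oscEnergy
  calc p ^ 2 / √w + lam ^ 2 * √w * q ^ 2
      = p ^ 2 * (1 / √w) + lam ^ 2 * q ^ 2 * √w := by ring
    _ ≤ p ^ 2 * (√Λ2 / √Λ1 * (1 / √w')) + lam ^ 2 * q ^ 2 * (√Λ2 / √Λ1 * √w') := by gcongr
    _ = _ := by ring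

lemma kowE_eq_oscEnergy (cinf lam : ℝ) (u u' : ℝ → ℝ) (t : ℝ) :
    kowE cinf lam u u' t = oscEnergy cinf lam (u' t) (u t) := rfl

noncomputable def taramaEnergy (lam : ℝ) (c c' u u' : ℝ → ℝ) (t : ℝ) : ℝ :=
  oscEnergy (c t) lam (u' t) (u t) + 1 / 2 * (c' t / (c t * √(c t))) * (u' t * u t)

section Solution

variable {lam t : ℝ} {s : Set ℝ} {c c' c'' u u' : ℝ → ℝ}

lemma hasDerivWithinAt_taramaEnergy (hc : HasDerivWithinAt c (c' t) s t)
    (hc' : HasDerivWithinAt c' (c'' t) s t) (hu : HasDerivWithinAt u (u' t) s t)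
    (hu' : HasDerivWithinAt u' (-(lam ^ 2 * c t * u t)) s t) (hct : 0 < c t) :
    HasDerivWithinAt (taramaEnergy lam c c' u u')
      (1 / 2 * (c'' t - 3 / 2 * c' t ^ 2 / c t) / (c t * √(c t)) * (u' t * u t)) s t := by
  have hs : 0 < √(c t) := sqrt_pos.2 hct
  have h_sqrt := hc.sqrt hct.ne'
  have h := ((hu'.pow 2).div h_sqrt hs.ne').add ((h_sqrt.const_mul (lam ^ 2)).mul (hu.pow 2))
    |>.add (((hc'.div (hc.mul h_sqrt) (mul_pos hct hs).ne').const_mul (1 / 2 : ℝ)).mul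
      (hu'.mul hu))
  refine h.congr_deriv ?_
  simp only [Pi.mul_apply, Pi.div_apply, Pi.pow_apply]
  have hs2 : √(c t) ^ 2 = c t := sq_sqrt hct.le
  set r := √(c t)
  rw [← hs2]
  field_simp
  ring

lemma hasDerivWithinAt_kowE {cinf : ℝ} (hcinf : 0 < cinf) (hu : HasDerivWithinAt u (u' t) s t)
    (hu' : HasDerivWithinAt u' (-(lam ^ 2 * c t * u t)) s t) :
    HasDerivWithinAt (kowE cinf lam u u')
      (2 * lam ^ 2 * (cinf - c t) / √cinf * (u' t * u t)) s t := by
  have hs : 0 < √cinf := sqrt_pos.2 hcinf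
  refine (((hu'.pow 2).div_const √cinf).add
    ((hu.pow 2).const_mul (lam ^ 2 * √cinf))).congr_deriv ?_
  have hs2 : √cinf ^ 2 = cinf := sq_sqrt hcinf.le
  set r := √cinf
  rw [← hs2]
  field_simp
  ring

lemma taramaEnergy_bounds (hct : 0 < c t)
    (hlam : 1 / 2 * |c' t| / c t ^ ((3 : ℝ) / 2) ≤ lam) :
    lam * |u' t * u t| ≤ taramaEnergy lam c c' u u' t ∧
      oscEnergy (c t) lam (u' t) (u t) ≤ 2 * taramaEnergy lam c c' u u' t ∧
      taramaEnergy lam c c' u u' t ≤ 3 / 2 * oscEnergy (c t) lam (u' t) (u t) := by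
  rw [show (3 : ℝ) / 2 = 1 + 1 / 2 by norm_num, rpow_add_half hct, rpow_one] at hlam
  have h_cross : |1 / 2 * (c' t / (c t * √(c t))) * (u' t * u t)| ≤ lam * |u' t * u t| := by
    rw [abs_mul, abs_mul, abs_of_pos one_half_pos, abs_div,
      abs_of_pos (mul_pos hct (sqrt_pos.2 hct)), ← mul_div_assoc]
    exact mul_le_mul_of_nonneg_right hlam (abs_nonneg _)
  have h_amgm := two_mul_abs_mul_le_oscEnergy hct lam (u' t) (u t)
  have := abs_le.1 h_cross
  unfold taramaEnergy
  exact ⟨by linarith, by linarith, by linarith⟩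

end Solution

lemma abs_taramaDerivCoeff_le {Λ1 γ x x' x'' : ℝ} (hΛ1 : 0 < Λ1) (hx : Λ1 ≤ x)
    (hx' : |x'| ≤ γ) (hx'' : |x''| ≤ γ ^ 2) :
    |1 / 2 * (x'' - 3 / 2 * x' ^ 2 / x) / (x * √x)| ≤
      (2 * Λ1 + 3) / (4 * Λ1 ^ ((5 : ℝ) / 2)) * γ ^ 2 := by
  have hm : 0 < √Λ1 := sqrt_pos.2 hΛ1
  have hx0 : 0 < x := hΛ1.trans_le hx
  have h_sq : x' ^ 2 ≤ γ ^ 2 := by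
    rw [← sq_abs]; exact pow_le_pow_left₀ (abs_nonneg _) hx' 2
  have h_num : |x'' - 3 / 2 * x' ^ 2 / x| ≤ γ ^ 2 + 3 / 2 * γ ^ 2 / Λ1 := by
    refine (abs_sub _ _).trans (add_le_add hx'' ?_)
    rw [abs_of_nonneg (by positivity)]
    gcongr
  have h_den : Λ1 * √Λ1 ≤ x * √x := mul_le_mul hx (sqrt_le_sqrt hx) hm.le hx0.le
  rw [abs_div, abs_mul, abs_of_pos (mul_pos hx0 (sqrt_pos.2 hx0)), abs_of_pos one_half_pos,
    show (5 : ℝ) / 2 = 2 + 1 / 2 by norm_num, rpow_add_half hΛ1, rpow_two]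
  calc 1 / 2 * |x'' - 3 / 2 * x' ^ 2 / x| / (x * √x)
      ≤ 1 / 2 * (γ ^ 2 + 3 / 2 * γ ^ 2 / Λ1) / (Λ1 * √Λ1) := by gcongr
    _ = _ := by field_simp; ring

lemma taramaDeriv_le {Λ1 lam γ x x' x'' p q T : ℝ} (hΛ1 : 0 < Λ1) (hx : Λ1 ≤ x)
    (hlam : 0 < lam) (hx' : |x'| ≤ γ) (hx'' : |x''| ≤ γ ^ 2) (hT : lam * |p * q| ≤ T) :
    1 / 2 * (x'' - 3 / 2 * x' ^ 2 / x) / (x * √x) * (p * q) ≤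
      (2 * Λ1 + 3) / (4 * Λ1 ^ ((5 : ℝ) / 2)) * (1 / lam) * γ ^ 2 * T := by
  have h_pq : |p * q| ≤ T / lam := by rw [le_div_iff₀ hlam]; linarith
  calc _ ≤ |1 / 2 * (x'' - 3 / 2 * x' ^ 2 / x) / (x * √x)| * |p * q| :=
        (le_abs_self _).trans (abs_mul _ _).le
    _ ≤ (2 * Λ1 + 3) / (4 * Λ1 ^ ((5 : ℝ) / 2)) * γ ^ 2 * (T / lam) := by
        gcongr
        exact abs_taramaDerivCoeff_le hΛ1 hx hx' hx''
    _ = _ := by ring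

lemma kowDeriv_le {Λ1 cinf lam x p q : ℝ} (hΛ1 : 0 < Λ1) (hcinf : Λ1 ≤ cinf) (hlam : 0 ≤ lam) :
    2 * lam ^ 2 * (cinf - x) / √cinf * (p * q) ≤
      lam / √Λ1 * |x - cinf| * oscEnergy cinf lam p q := by
  have h_cross : (cinf - x) * (p * q) ≤ |x - cinf| * |p * q| := by
    rw [abs_sub_comm, ← abs_mul]; exact le_abs_self _
  have hE := two_mul_abs_mul_le_oscEnergy (hΛ1.trans_le hcinf) lam p q
  calc 2 * lam ^ 2 * (cinf - x) / √cinf * (p * q)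
      = lam / √cinf * (2 * lam * ((cinf - x) * (p * q))) := by ring
    _ ≤ lam / √cinf * (2 * lam * (|x - cinf| * |p * q|)) := by gcongr
    _ = lam / √cinf * |x - cinf| * (2 * lam * |p * q|) := by ring
    _ ≤ lam / √Λ1 * |x - cinf| * oscEnergy cinf lam p q := by gcongr

lemma taramaEnergy_le_mul_exp {x y Λ1 lam : ℝ} {s : Set ℝ} {c c' c'' γ u u' : ℝ → ℝ}
    (hxy : x ≤ y) (hs : Icc x y ⊆ s) (hΛ1 : 0 < Λ1) (hlam : 0 < lam)
    (hc : ∀ t ∈ s, HasDerivWithinAt c (c' t) s t)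
    (hc' : ∀ t ∈ s, HasDerivWithinAt c' (c'' t) s t)
    (hc_ge : ∀ t ∈ Icc x y, Λ1 ≤ c t) (hγ : ContinuousOn γ (Icc x y))
    (hder : ∀ t ∈ Icc x y, |c' t| ≤ γ t ∧ |c'' t| ≤ γ t ^ 2)
    (hlam_ge : ∀ t ∈ Icc x y, 1 / 2 * |c' t| / c t ^ ((3 : ℝ) / 2) ≤ lam)
    (hu : ∀ t ∈ s, HasDerivWithinAt u (u' t) s t)
    (hu' : ∀ t ∈ s, HasDerivWithinAt u' (-(lam ^ 2 * c t * u t)) s t) :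
    taramaEnergy lam c c' u u' y ≤ taramaEnergy lam c c' u u' x *
      exp ((2 * Λ1 + 3) / (4 * Λ1 ^ ((5 : ℝ) / 2)) * (1 / lam) * ∫ τ in x..y, γ τ ^ 2) := by
  have hc_pos : ∀ t ∈ Icc x y, 0 < c t := fun t ht => hΛ1.trans_le (hc_ge t ht)
  rw [← intervalIntegral.integral_const_mul]
  refine le_mul_exp_integral_of_hasDerivWithinAt_le_mul hxy
    (fun t ht => (hasDerivWithinAt_taramaEnergy (hc t (hs ht)) (hc' t (hs ht)) (hu t (hs ht))
      (hu' t (hs ht)) (hc_pos t ht)).mono hs)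
    (continuousOn_const.mul (hγ.pow 2)) fun t ht => ?_
  replace ht := Ioo_subset_Icc_self ht
  exact taramaDeriv_le hΛ1 (hc_ge t ht) hlam (hder t ht).1 (hder t ht).2
    (taramaEnergy_bounds (hc_pos t ht) (hlam_ge t ht)).1

lemma kowE_le_mul_exp {x y Λ1 cinf lam : ℝ} {s : Set ℝ} {c u u' : ℝ → ℝ} (hxy : x ≤ y)
    (hs : Icc x y ⊆ s) (hΛ1 : 0 < Λ1) (hcinf : Λ1 ≤ cinf) (hlam : 0 ≤ lam)
    (hc : ContinuousOn c s) (hu : ∀ t ∈ s, HasDerivWithinAt u (u' t) s t)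
    (hu' : ∀ t ∈ s, HasDerivWithinAt u' (-(lam ^ 2 * c t * u t)) s t) :
    kowE cinf lam u u' y ≤
      kowE cinf lam u u' x * exp (lam / √Λ1 * ∫ τ in x..y, |c τ - cinf|) := by
  rw [← intervalIntegral.integral_const_mul]
  exact le_mul_exp_integral_of_hasDerivWithinAt_le_mul hxy
    (fun t ht =>
      (hasDerivWithinAt_kowE (hΛ1.trans_le hcinf) (hu t (hs ht)) (hu' t (hs ht))).mono hs)
    (continuousOn_const.mul ((hc.mono hs).sub continuousOn_const).abs)
    fun _ _ => kowDeriv_le hΛ1 hcinf hlam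

theorem mixed_estimate_general
    (a b d Λ1 Λ2 cinf lam : ℝ)
    (hab : a ≤ b) (hbd : b ≤ d)
    (hΛ1 : 0 < Λ1) (hcinf : cinf ∈ Icc Λ1 Λ2) (hlam : 0 < lam)
    (c c' c'' γ : ℝ → ℝ)
    (hc1 : ∀ t ∈ Icc a d, HasDerivWithinAt c (c' t) (Icc a d) t)
    (hc2 : ∀ t ∈ Icc a d, HasDerivWithinAt c' (c'' t) (Icc a d) t)
    (hbounds : ∀ t ∈ Icc a d, Λ1 ≤ c t ∧ c t ≤ Λ2)
    (hγ_cont : ContinuousOn γ (Icc a b))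
    (hder : ∀ t ∈ Icc a b, |c' t| ≤ γ t ∧ |c'' t| ≤ (γ t) ^ 2)
    (hlam_ge : ∀ t ∈ Icc a b, (1 / 2) * |c' t| / (c t) ^ ((3 : ℝ) / 2) ≤ lam)
    (u u' : ℝ → ℝ)
    (hu : ∀ t ∈ Icc a d, HasDerivWithinAt u (u' t) (Icc a d) t)
    (hu' : ∀ t ∈ Icc a d, HasDerivWithinAt u' (-(lam ^ 2 * c t * u t)) (Icc a d) t) :
    kowE cinf lam u u' d ≤
      3 * Λ2 / Λ1 * kowE cinf lam u u' a *
        Real.exp ((2 * Λ1 + 3) / (4 * Λ1 ^ ((5 : ℝ) / 2)) * (1 / lam) *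
            (∫ τ in a..b, (γ τ) ^ 2) +
          lam / Real.sqrt Λ1 * ∫ τ in b..d, |c τ - cinf|) := by
  have hab_sub : Icc a b ⊆ Icc a d := Icc_subset_Icc_right hbd
  have ha : a ∈ Icc a b := left_mem_Icc.2 hab
  have hb : b ∈ Icc a b := right_mem_Icc.2 hab
  have h_first := taramaEnergy_le_mul_exp hab hab_sub hΛ1 hlam hc1 hc2
    (fun t ht => (hbounds t (hab_sub ht)).1) hγ_cont hder hlam_ge hu hu'
  have h_second := kowE_le_mul_exp hbd (Icc_subset_Icc_left hab) hΛ1 hcinf.1 hlam.le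
    (fun t ht => (hc1 t ht).continuousWithinAt) hu hu'
  have hT_a := taramaEnergy_bounds (u := u) (u' := u')
    (hΛ1.trans_le (hbounds a (hab_sub ha)).1) (hlam_ge a ha)
  have hT_b := taramaEnergy_bounds (u := u) (u' := u')
    (hΛ1.trans_le (hbounds b (hab_sub hb)).1) (hlam_ge b hb)
  have hE_b := oscEnergy_le_mul_oscEnergy hΛ1 hcinf (hbounds b (hab_sub hb)) lam (u' b) (u b)
  have hE_a := oscEnergy_le_mul_oscEnergy hΛ1 (hbounds a (hab_sub ha)) hcinf lam (u' a) (u a)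
  have hr : √Λ2 / √Λ1 * (√Λ2 / √Λ1) = Λ2 / Λ1 := by
    rw [div_mul_div_comm, mul_self_sqrt (hΛ1.le.trans (hcinf.1.trans hcinf.2)),
      mul_self_sqrt hΛ1.le]
  simp only [kowE_eq_oscEnergy] at h_second ⊢
  set r := √Λ2 / √Λ1
  calc oscEnergy cinf lam (u' d) (u d)
      ≤ r * (2 * taramaEnergy lam c c' u u' b) *
          exp (lam / √Λ1 * ∫ τ in b..d, |c τ - cinf|) := by
        refine h_second.trans ?_
        gcongr
        exact hE_b.trans (by gcongr; exact hT_b.2.1)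
    _ ≤ r * (2 * (3 / 2 * (r * oscEnergy cinf lam (u' a) (u a)) *
          exp ((2 * Λ1 + 3) / (4 * Λ1 ^ ((5 : ℝ) / 2)) * (1 / lam) * ∫ τ in a..b, γ τ ^ 2))) *
          exp (lam / √Λ1 * ∫ τ in b..d, |c τ - cinf|) := by
        gcongr
        refine h_first.trans ?_
        gcongr
        exact hT_a.2.2.trans (by gcongr)
    _ = _ := by rw [exp_add, mul_div_assoc, ← hr]; ring

theorem mixed_estimate
    (t0 a b d Λ1 Λ2 cinf lam : ℝ)
    (ht0a : t0 ≤ a) (hab : a ≤ b) (hbd : b ≤ d)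
    (hΛ1 : 0 < Λ1) (hΛ12 : Λ1 ≤ Λ2) (hcinf : cinf ∈ Icc Λ1 Λ2) (hlam : 0 < lam)
    (c c' c'' γ : ℝ → ℝ)
    (hc1 : ∀ t ∈ Icc a d, HasDerivWithinAt c (c' t) (Icc a d) t)
    (hc2 : ∀ t ∈ Icc a d, HasDerivWithinAt c' (c'' t) (Icc a d) t)
    (hc2cont : ContinuousOn c'' (Icc a d))
    (hbounds : ∀ t ∈ Icc a d, Λ1 ≤ c t ∧ c t ≤ Λ2)
    (hγ_cont : ContinuousOn γ (Icc a b)) (hγ_nonneg : ∀ t ∈ Icc a b, 0 ≤ γ t)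
    (hder : ∀ t ∈ Icc a b, |c' t| ≤ γ t ∧ |c'' t| ≤ (γ t) ^ 2)
    (hlam_ge : ∀ t ∈ Icc a b, (1 / 2) * |c' t| / (c t) ^ ((3 : ℝ) / 2) ≤ lam)
    (u u' : ℝ → ℝ)
    (hu : ∀ t ∈ Icc a d, HasDerivWithinAt u (u' t) (Icc a d) t)
    (hu' : ∀ t ∈ Icc a d, HasDerivWithinAt u' (-(lam ^ 2 * c t * u t)) (Icc a d) t) :
    kowE cinf lam u u' d ≤
      3 * Λ2 / Λ1 * kowE cinf lam u u' a *
        Real.exp ((2 * Λ1 + 3) / (4 * Λ1 ^ ((5 : ℝ) / 2)) * (1 / lam) *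
            (∫ τ in a..b, (γ τ) ^ 2) +
          lam / Real.sqrt Λ1 * ∫ τ in b..d, |c τ - cinf|) :=
  mixed_estimate_general a b d Λ1 Λ2 cinf lam hab hbd hΛ1 hcinf hlam c c' c'' γ hc1 hc2 hbounds
    hγ_cont hder hlam_ge u u' hu hu'
end

section
/- Let c belong to the class PS(t0,Λ1,Λ2,S,γ) with γ non-decreasing, and let c∞ ∈ [Λ1,Λ2] be its stabilization constant. Then for every interval [a,b] ⊆ [t0,∞) it turns out that γ(a)·∫_a^b |c(τ) − c∞| dτ ≤ 2(Λ2 − Λ1)^{1/2}·M(b)^{1/2}. -/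
open Real Set Filter MeasureTheory

/-- `G(t) = ∫_{t0}^t γ(τ)² dτ`. -/
noncomputable def Gfun (t0 : ℝ) (γ : ℝ → ℝ) (t : ℝ) : ℝ :=
  ∫ τ in t0..t, (γ τ) ^ 2

/-- `M(t) = max { G(τ)·S(τ) : τ ∈ [t0,t] }`. -/
noncomputable def Mfun (t0 : ℝ) (γ S : ℝ → ℝ) (t : ℝ) : ℝ :=
  sSup ((fun τ => Gfun t0 γ τ * S τ) '' Icc t0 t)

theorem gamma_times_integral_estimate
    (t0 Λ1 Λ2 : ℝ) (hΛ1 : 0 < Λ1) (hΛ12 : Λ1 ≤ Λ2)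
    (S γ : ℝ → ℝ)
    (hS_cont : ContinuousOn S (Ici t0)) (hS_anti : AntitoneOn S (Ici t0))
    (hS_lim : Tendsto S atTop (nhds 0))
    (hγ_cont : ContinuousOn γ (Ici t0)) (hγ_mono : MonotoneOn γ (Ici t0))
    (c c' c'' : ℝ → ℝ)
    (hc1 : ∀ t ∈ Ici t0, HasDerivWithinAt c (c' t) (Ici t0) t)
    (hc2 : ∀ t ∈ Ici t0, HasDerivWithinAt c' (c'' t) (Ici t0) t)
    (hc2cont : ContinuousOn c'' (Ici t0))
    (hhyp : ∀ t ∈ Ici t0, Λ1 ≤ c t ∧ c t ≤ Λ2)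
    (cinf : ℝ) (hcinf : cinf ∈ Icc Λ1 Λ2)
    (hstab : ∀ t ∈ Ici t0, ∀ b ≥ t, (∫ τ in t..b, |c τ - cinf|) ≤ S t)
    (hder : ∀ t ∈ Ici t0, |c' t| ≤ γ t ∧ |c'' t| ≤ (γ t) ^ 2) :
    ∀ a b : ℝ, t0 ≤ a → a ≤ b →
      γ a * (∫ τ in a..b, |c τ - cinf|) ≤
        2 * Real.sqrt (Λ2 - Λ1) * Real.sqrt (Mfun t0 γ S b) := by
  intro a b hta hab
  have ht0b : t0 ≤ b := hta.trans hab
  have haI : a ∈ Ici t0 := hta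
  have hbI : b ∈ Ici t0 := ht0b
  set K := Λ2 - Λ1 with hKdef
  have hK0 : 0 ≤ K := by simp only [hKdef]; linarith
  -- basic facts
  have hγ0 : ∀ t ∈ Ici t0, 0 ≤ γ t := fun t ht => (abs_nonneg _).trans (hder t ht).1
  have hS0 : ∀ t ∈ Ici t0, 0 ≤ S t := by
    intro t ht
    have h := hstab t ht t le_rfl
    simpa using h
  have hc_cont : ContinuousOn c (Ici t0) := fun t ht => (hc1 t ht).continuousWithinAt
  have hf_cont : ContinuousOn (fun τ => |c τ - cinf|) (Ici t0) :=
    (hc_cont.sub continuousOn_const).abs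
  have hγ2_cont : ContinuousOn (fun τ => γ τ ^ 2) (Ici t0) := hγ_cont.pow 2
  have hsubIci : ∀ u v : ℝ, t0 ≤ u → t0 ≤ v → uIcc u v ⊆ Ici t0 := by
    intro u v hu hv x hx
    exact le_trans (le_min hu hv) hx.1
  have hfint : ∀ u v : ℝ, t0 ≤ u → t0 ≤ v →
      IntervalIntegrable (fun τ => |c τ - cinf|) volume u v := by
    intro u v hu hv
    exact (hf_cont.mono (hsubIci u v hu hv)).intervalIntegrable
  have hγint : ∀ u v : ℝ, t0 ≤ u → t0 ≤ v →
      IntervalIntegrable (fun τ => γ τ ^ 2) volume u v := by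
    intro u v hu hv
    exact (hγ2_cont.mono (hsubIci u v hu hv)).intervalIntegrable
  -- pointwise bound on f
  have hfK : ∀ t ∈ Ici t0, |c t - cinf| ≤ K := by
    intro t ht
    have h1 := (hhyp t ht).1
    have h2 := (hhyp t ht).2
    have h3 := hcinf.1
    have h4 := hcinf.2
    rw [abs_le]
    constructor <;> simp only [hKdef] <;> linarith
  -- G facts
  have hGsub : ∀ m : ℝ, t0 ≤ m →
      Gfun t0 γ m - Gfun t0 γ a = ∫ τ in a..m, γ τ ^ 2 := by
    intro m hm
    exact intervalIntegral.integral_interval_sub_left (hγint t0 m le_rfl hm)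
      (hγint t0 a le_rfl hta)
  have hGnonneg : ∀ m : ℝ, t0 ≤ m → 0 ≤ Gfun t0 γ m := by
    intro m hm
    exact intervalIntegral.integral_nonneg hm (fun x _ => sq_nonneg _)
  have hGcont : ContinuousOn (Gfun t0 γ) (Icc t0 b) := by
    have h := intervalIntegral.continuousOn_primitive_interval
      (f := fun τ => γ τ ^ 2) (μ := volume) (a := t0) (b := b)
      ((hγ2_cont.mono (hsubIci t0 b le_rfl ht0b)).integrableOn_Icc.mono_set
        (by rw [uIcc_of_le ht0b] <;> exact Icc_subset_Icc inf_le_left le_sup_right))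
    rwa [uIcc_of_le ht0b] at h
  -- M facts
  have hGScont : ContinuousOn (fun τ => Gfun t0 γ τ * S τ) (Icc t0 b) :=
    hGcont.mul (hS_cont.mono Icc_subset_Ici_self)
  have hbdd : BddAbove ((fun τ => Gfun t0 γ τ * S τ) '' Icc t0 b) :=
    (isCompact_Icc.image_of_continuousOn hGScont).bddAbove
  have hMle : ∀ m ∈ Icc t0 b, Gfun t0 γ m * S m ≤ Mfun t0 γ S b := by
    intro m hm
    exact le_csSup hbdd ⟨m, hm, rfl⟩
  have hM0 : 0 ≤ Mfun t0 γ S b := by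
    have h := hMle t0 ⟨le_rfl, ht0b⟩
    have h0 : Gfun t0 γ t0 = 0 := by simp [Gfun]
    rw [h0, zero_mul] at h
    exact h
  -- notation
  set M := Mfun t0 γ S b with hMdef
  set ga := γ a with hgadef
  have hga0 : 0 ≤ ga := hγ0 a haI
  set L := ga * ∫ τ in a..b, |c τ - cinf| with hLdef
  have hInt0 : 0 ≤ ∫ τ in a..b, |c τ - cinf| :=
    intervalIntegral.integral_nonneg hab (fun x _ => abs_nonneg _)
  have hL0 : 0 ≤ L := mul_nonneg hga0 hInt0
  -- partial integral bound: for m ∈ [a,b], ga^2 * ∫_a^m f ≤ K * (G m - G a)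
  have hpart : ∀ m ∈ Icc a b, ga ^ 2 * ∫ τ in a..m, |c τ - cinf| ≤
      K * (Gfun t0 γ m - Gfun t0 γ a) := by
    intro m hm
    have ht0m : t0 ≤ m := hta.trans hm.1
    have h1 : (∫ τ in a..m, |c τ - cinf|) ≤ (m - a) * K := by
      have h := intervalIntegral.integral_mono_on (μ := volume) hm.1
        (hfint a m hta ht0m) intervalIntegrable_const
        (g := fun _ => K)
        (fun x hx => hfK x (hta.trans hx.1))
      rwa [intervalIntegral.integral_const, smul_eq_mul] at h
    have h2 : ga ^ 2 * (m - a) ≤ ∫ τ in a..m, γ τ ^ 2 := by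
      have h := intervalIntegral.integral_mono_on (μ := volume) hm.1
        intervalIntegrable_const (hγint a m hta ht0m)
        (f := fun _ => ga ^ 2)
        (fun x hx => by
          have hgx : ga ≤ γ x := hγ_mono haI (hta.trans hx.1) hx.1
          exact pow_le_pow_left₀ hga0 hgx 2)
      rw [intervalIntegral.integral_const, smul_eq_mul] at h
      linarith
    rw [hGsub m ht0m]
    calc ga ^ 2 * ∫ τ in a..m, |c τ - cinf| ≤ ga ^ 2 * ((m - a) * K) :=
          mul_le_mul_of_nonneg_left h1 (sq_nonneg ga)
      _ = ga ^ 2 * (m - a) * K := by ring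
      _ ≤ (∫ τ in a..m, γ τ ^ 2) * K := mul_le_mul_of_nonneg_right h2 hK0
      _ = K * ∫ τ in a..m, γ τ ^ 2 := by ring
  -- key estimate
  have hkey : L ^ 2 ≤ 4 * K * M := by
    rcases eq_or_lt_of_le hga0 with h0 | hga_pos
    · have : L = 0 := by rw [hLdef, ← h0, zero_mul]
      rw [this]
      have := mul_nonneg hK0 hM0
      nlinarith
    · set X : ℝ → ℝ := fun m => K * (Gfun t0 γ m - Gfun t0 γ a) with hXdef
      set Y : ℝ → ℝ := fun m => ga ^ 2 * S m with hYdef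
      have hbound : ∀ m ∈ Icc a b, ga * L ≤ X m + Y m := by
        intro m hm
        have ht0m : t0 ≤ m := hta.trans hm.1
        have hsplit : (∫ τ in a..b, |c τ - cinf|) =
            (∫ τ in a..m, |c τ - cinf|) + ∫ τ in m..b, |c τ - cinf| :=
          (intervalIntegral.integral_add_adjacent_intervals
            (hfint a m hta ht0m) (hfint m b ht0m ht0b)).symm
        have htail : (∫ τ in m..b, |c τ - cinf|) ≤ S m := hstab m ht0m b hm.2
        have h1 := hpart m hm
        have : ga * L = ga ^ 2 * ((∫ τ in a..m, |c τ - cinf|) +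
            ∫ τ in m..b, |c τ - cinf|) := by
          rw [hLdef, ← hsplit]; ring
        rw [this, mul_add]
        have h2 : ga ^ 2 * ∫ τ in m..b, |c τ - cinf| ≤ ga ^ 2 * S m :=
          mul_le_mul_of_nonneg_left htail (sq_nonneg ga)
        simp only [hXdef, hYdef]
        linarith
      have hXYle : ∀ m ∈ Icc a b, X m * Y m ≤ K * ga ^ 2 * M := by
        intro m hm
        have ht0m : t0 ≤ m := hta.trans hm.1
        have hGm : Gfun t0 γ m - Gfun t0 γ a ≤ Gfun t0 γ m := by
          have := hGnonneg a hta; linarith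
        have hSm : 0 ≤ S m := hS0 m ht0m
        have hGSM : Gfun t0 γ m * S m ≤ M := hMle m ⟨ht0m, hm.2⟩
        have h1 : (Gfun t0 γ m - Gfun t0 γ a) * S m ≤ M :=
          (mul_le_mul_of_nonneg_right hGm hSm).trans hGSM
        simp only [hXdef, hYdef]
        calc K * (Gfun t0 γ m - Gfun t0 γ a) * (ga ^ 2 * S m)
            = (K * ga ^ 2) * ((Gfun t0 γ m - Gfun t0 γ a) * S m) := by ring
          _ ≤ (K * ga ^ 2) * M :=
              mul_le_mul_of_nonneg_left h1 (mul_nonneg hK0 (sq_nonneg ga))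
          _ = K * ga ^ 2 * M := by ring
      have hX0 : ∀ m ∈ Icc a b, 0 ≤ X m := by
        intro m hm
        have ht0m : t0 ≤ m := hta.trans hm.1
        have : 0 ≤ ∫ τ in a..m, γ τ ^ 2 :=
          intervalIntegral.integral_nonneg hm.1 (fun x _ => sq_nonneg _)
        simp only [hXdef]
        rw [hGsub m ht0m]
        exact mul_nonneg hK0 this
      by_cases hcase : X b ≤ Y b
      · -- take m = b directly, no tail
        have h1 : ga * L ≤ X b := by
          have h2 := hpart b ⟨hab, le_rfl⟩
          have : ga * L = ga ^ 2 * ∫ τ in a..b, |c τ - cinf| := by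
            rw [hLdef]; ring
          rw [this]
          exact h2
        have hXb0 : 0 ≤ X b := hX0 b ⟨hab, le_rfl⟩
        have h2 : (ga * L) ^ 2 ≤ X b ^ 2 :=
          pow_le_pow_left₀ (mul_nonneg hga0 hL0) h1 2
        have h3 : X b ^ 2 ≤ X b * Y b := by
          calc X b ^ 2 = X b * X b := sq (X b) ▸ rfl
            _ ≤ X b * Y b := mul_le_mul_of_nonneg_left hcase hXb0
        have h4 : X b * Y b ≤ K * ga ^ 2 * M := hXYle b ⟨hab, le_rfl⟩
        have h5 : ga ^ 2 * L ^ 2 ≤ ga ^ 2 * (K * M) := by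
          calc ga ^ 2 * L ^ 2 = (ga * L) ^ 2 := by ring
            _ ≤ X b ^ 2 := h2
            _ ≤ X b * Y b := h3
            _ ≤ K * ga ^ 2 * M := h4
            _ = ga ^ 2 * (K * M) := by ring
        have h6 : L ^ 2 ≤ K * M :=
          le_of_mul_le_mul_left h5 (by positivity : (0:ℝ) < ga ^ 2)
        have h7 : 0 ≤ K * M := mul_nonneg hK0 hM0
        linarith
      · -- IVT: find m with X m = Y m
        push_neg at hcase
        have hcontXY : ContinuousOn (fun m => X m - Y m) (Icc a b) := by
          apply ContinuousOn.sub
          · exact continuousOn_const.mul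
              ((hGcont.mono (Icc_subset_Icc hta le_rfl)).sub continuousOn_const)
          · exact continuousOn_const.mul
              ((hS_cont.mono (fun x hx => hta.trans hx.1)).mono
                (fun x hx => hx))
        have hha : X a - Y a ≤ 0 := by
          have : X a = 0 := by simp [hXdef]
          rw [this]
          have : 0 ≤ Y a := mul_nonneg (sq_nonneg _) (hS0 a hta)
          linarith
        have hhb : 0 ≤ X b - Y b := by linarith
        have hmem : (0:ℝ) ∈ Icc (X a - Y a) (X b - Y b) := ⟨hha, hhb⟩
        obtain ⟨m, hm, hm0⟩ := intermediate_value_Icc hab hcontXY hmem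
        have hXY : X m = Y m := by linarith [sub_eq_zero.mp hm0]
        have h1 : ga * L ≤ 2 * X m := by
          have := hbound m hm
          rw [hXY] at this ⊢
          linarith
        have hXm0 : 0 ≤ X m := hX0 m hm
        have h2 : (ga * L) ^ 2 ≤ 4 * (X m * Y m) := by
          have := pow_le_pow_left₀ (mul_nonneg hga0 hL0) h1 2
          calc (ga * L) ^ 2 ≤ (2 * X m) ^ 2 := this
            _ = 4 * (X m * X m) := by ring
            _ = 4 * (X m * Y m) := by rw [hXY]
        have h3 : X m * Y m ≤ K * ga ^ 2 * M := hXYle m hm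
        have h5 : ga ^ 2 * L ^ 2 ≤ ga ^ 2 * (4 * K * M) := by
          calc ga ^ 2 * L ^ 2 = (ga * L) ^ 2 := by ring
            _ ≤ 4 * (X m * Y m) := h2
            _ ≤ 4 * (K * ga ^ 2 * M) := by linarith
            _ = ga ^ 2 * (4 * K * M) := by ring
        exact le_of_mul_le_mul_left h5 (by positivity : (0:ℝ) < ga ^ 2)
  -- conclude
  have hR0 : 0 ≤ 2 * Real.sqrt K * Real.sqrt M := by positivity
  calc L = Real.sqrt (L ^ 2) := (Real.sqrt_sq hL0).symm
    _ ≤ Real.sqrt (4 * K * M) := Real.sqrt_le_sqrt hkey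
    _ = 2 * Real.sqrt K * Real.sqrt M := by
        rw [show (4:ℝ) * K * M = (2 * Real.sqrt K * Real.sqrt M) ^ 2 by
          rw [mul_pow, mul_pow, Real.sq_sqrt hK0, Real.sq_sqrt hM0]; ring]
        exact Real.sqrt_sq hR0
end

section
/- Let t0 be a real number, let g : [t0,∞) → [0,∞) be a monotone (either non-increasing or non-decreasing) function of class C¹, and set G(t) = ∫_{t0}^t g(τ) dτ. Assume there exists a constant Λ4 such that |g'(t)| ≤ Λ4·g(t) for all t ≥ t0. Then there exist constants Γ1 and Γ2 such that g(t) ≤ Γ1·G(t) for every t ≥ t0 + 1, and G(t+1) ≤ Γ2·G(t) for every t ≥ t0 + 1. -/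
open Real Set MeasureTheory

/-!
Grönwall's inequality turns `|g'| ≤ Λ₄ g` into `g t ≤ e^{|Λ₄|} g s` whenever `s ≤ t ≤ s + 1`, so
`g` is comparable to its average over any unit window. Averaging over `[t - 1, t]` bounds `g t`
by `e^{|Λ₄|} G(t)`, and averaging over `[t, t + 1]` bounds `G(t + 1) - G(t)` by `e^{|Λ₄|} g t`.
-/

theorem le_mul_exp_of_abs_deriv_le_mul {g g' : ℝ → ℝ} {t0 K : ℝ}
    (hg_nonneg : ∀ t ∈ Ici t0, 0 ≤ g t)
    (hg : ∀ t ∈ Ici t0, HasDerivWithinAt g (g' t) (Ici t0) t)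
    (hK : ∀ t ∈ Ici t0, |g' t| ≤ K * g t) {s t : ℝ} (hs : t0 ≤ s) (hst : s ≤ t) :
    g t ≤ g s * exp (K * (t - s)) := by
  have hsub : Icc s t ⊆ Ici t0 := fun x hx => hs.trans hx.1
  have hgronwall := norm_le_gronwallBound_of_norm_deriv_right_le (f := g) (f' := g') (ε := 0)
    (fun x hx => (hg x (hsub hx)).continuousWithinAt.mono hsub)
    (fun x hx => (hg x (hsub (Ico_subset_Icc_self hx))).mono
      (Ici_subset_Ici.2 (hs.trans hx.1)))
    le_rfl
    (fun x hx => by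
      have hx0 := hsub (Ico_subset_Icc_self hx)
      simpa [abs_of_nonneg (hg_nonneg x hx0)] using hK x hx0)
    t ⟨hst, le_rfl⟩
  rwa [gronwallBound_ε0, Real.norm_of_nonneg (hg_nonneg t (hs.trans hst)),
    Real.norm_of_nonneg (hg_nonneg s hs)] at hgronwall

theorem le_exp_abs_mul_of_abs_deriv_le_mul {g g' : ℝ → ℝ} {t0 K : ℝ}
    (hg_nonneg : ∀ t ∈ Ici t0, 0 ≤ g t)
    (hg : ∀ t ∈ Ici t0, HasDerivWithinAt g (g' t) (Ici t0) t)
    (hK : ∀ t ∈ Ici t0, |g' t| ≤ K * g t) {s t : ℝ} (hs : t0 ≤ s) (hst : s ≤ t)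
    (hts : t ≤ s + 1) :
    g t ≤ exp |K| * g s := by
  have hexp : exp (K * (t - s)) ≤ exp |K| := by
    gcongr
    calc K * (t - s) ≤ |K| * (t - s) := mul_le_mul_of_nonneg_right (le_abs_self K) (by linarith)
      _ ≤ |K| * 1 := by gcongr; linarith
      _ = |K| := mul_one _
  calc g t ≤ g s * exp (K * (t - s)) := le_mul_exp_of_abs_deriv_le_mul hg_nonneg hg hK hs hst
    _ ≤ g s * exp |K| := by gcongr; exact hg_nonneg s hs
    _ = exp |K| * g s := mul_comm _ _

section UnitWindow

variable {g : ℝ → ℝ} {t0 C : ℝ}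

theorem le_mul_integral_of_le_mul_on_unit_windows
    (hg_nonneg : ∀ t ∈ Ici t0, 0 ≤ g t) (hg_cont : ContinuousOn g (Ici t0)) (hC : 0 ≤ C)
    (hwin : ∀ s t, t0 ≤ s → s ≤ t → t ≤ s + 1 → g t ≤ C * g s) {t : ℝ} (ht : t0 + 1 ≤ t) :
    g t ≤ C * ∫ τ in t0..t, g τ := by
  have hsub : Icc (t - 1) t ⊆ Ici t0 := fun x hx => by simp only [mem_Ici]; linarith [hx.1]
  calc g t = ∫ _ in (t - 1)..t, g t := by simp
    _ ≤ ∫ τ in (t - 1)..t, C * g τ :=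
        intervalIntegral.integral_mono_on (by linarith) intervalIntegrable_const
          (((hg_cont.mono hsub).intervalIntegrable_of_Icc (by linarith)).const_mul C)
          fun τ hτ => hwin τ t (hsub hτ) hτ.2 (by linarith [hτ.1])
    _ = C * ∫ τ in (t - 1)..t, g τ := intervalIntegral.integral_const_mul _ _
    _ ≤ C * ∫ τ in t0..t, g τ := by
        gcongr
        refine intervalIntegral.integral_mono_interval (by linarith) (by linarith) le_rfl
          ((ae_restrict_iff' measurableSet_Ioc).2 (.of_forall fun τ hτ => hg_nonneg τ hτ.1.le))
          ((hg_cont.mono Icc_subset_Ici_self).intervalIntegrable_of_Icc (by linarith))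

theorem integral_add_one_le_mul_integral_of_le_mul_on_unit_windows
    (hg_nonneg : ∀ t ∈ Ici t0, 0 ≤ g t) (hg_cont : ContinuousOn g (Ici t0)) (hC : 0 ≤ C)
    (hwin : ∀ s t, t0 ≤ s → s ≤ t → t ≤ s + 1 → g t ≤ C * g s) {t : ℝ} (ht : t0 + 1 ≤ t) :
    (∫ τ in t0..(t + 1), g τ) ≤ (1 + C * C) * ∫ τ in t0..t, g τ := by
  have hint : ∀ a b, t0 ≤ a → a ≤ b → IntervalIntegrable g volume a b := fun a b ha hab =>
    (hg_cont.mono fun x hx => ha.trans hx.1).intervalIntegrable_of_Icc hab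
  have htail : (∫ τ in t..(t + 1), g τ) ≤ C * g t :=
    calc (∫ τ in t..(t + 1), g τ) ≤ ∫ _ in t..(t + 1), C * g t :=
          intervalIntegral.integral_mono_on (by linarith) (hint _ _ (by linarith) (by linarith))
            intervalIntegrable_const fun τ hτ => hwin t τ (by linarith) hτ.1 hτ.2
      _ = C * g t := by simp
  have hg_le := le_mul_integral_of_le_mul_on_unit_windows hg_nonneg hg_cont hC hwin ht
  rw [← intervalIntegral.integral_add_adjacent_intervals (hint t0 t le_rfl (by linarith))
    (hint t (t + 1) (by linarith) (by linarith))]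
  nlinarith [mul_le_mul_of_nonneg_left hg_le hC]

end UnitWindow

theorem integral_comparison_of_exponential_growth_bound_general
    (t0 Λ4 : ℝ) (g g' : ℝ → ℝ)
    (hg_nonneg : ∀ t ∈ Ici t0, 0 ≤ g t)
    (hg1 : ∀ t ∈ Ici t0, HasDerivWithinAt g (g' t) (Ici t0) t)
    (hΛ4 : ∀ t ∈ Ici t0, |g' t| ≤ Λ4 * g t) :
    ∃ Γ1 Γ2 : ℝ,
      (∀ t ≥ t0 + 1, g t ≤ Γ1 * ∫ τ in t0..t, g τ) ∧
      (∀ t ≥ t0 + 1, (∫ τ in t0..(t + 1), g τ) ≤ Γ2 * ∫ τ in t0..t, g τ) := by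
  have hg_cont : ContinuousOn g (Ici t0) := fun t ht => (hg1 t ht).continuousWithinAt
  have hwin : ∀ s t, t0 ≤ s → s ≤ t → t ≤ s + 1 → g t ≤ exp |Λ4| * g s :=
    fun _ _ hs hst hts => le_exp_abs_mul_of_abs_deriv_le_mul hg_nonneg hg1 hΛ4 hs hst hts
  exact ⟨exp |Λ4|, 1 + exp |Λ4| * exp |Λ4|,
    fun _ ht => le_mul_integral_of_le_mul_on_unit_windows hg_nonneg hg_cont (exp_pos _).le hwin ht,
    fun _ ht => integral_add_one_le_mul_integral_of_le_mul_on_unit_windows hg_nonneg hg_cont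
      (exp_pos _).le hwin ht⟩

theorem integral_comparison_of_exponential_growth_bound
    (t0 Λ4 : ℝ) (g g' : ℝ → ℝ)
    (hg_nonneg : ∀ t ∈ Ici t0, 0 ≤ g t)
    (hg_mono : MonotoneOn g (Ici t0) ∨ AntitoneOn g (Ici t0))
    (hg1 : ∀ t ∈ Ici t0, HasDerivWithinAt g (g' t) (Ici t0) t)
    (hg1cont : ContinuousOn g' (Ici t0))
    (hΛ4 : ∀ t ∈ Ici t0, |g' t| ≤ Λ4 * g t) :
    ∃ Γ1 Γ2 : ℝ,
      (∀ t ≥ t0 + 1, g t ≤ Γ1 * ∫ τ in t0..t, g τ) ∧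
      (∀ t ≥ t0 + 1, (∫ τ in t0..(t + 1), g τ) ≤ Γ2 * ∫ τ in t0..t, g τ) :=
  integral_comparison_of_exponential_growth_bound_general t0 Λ4 g g' hg_nonneg hg1 hΛ4
end

section
/- Let t0 be a real number, let g : [t0,∞) → [0,∞) be a monotone (either non-increasing or non-decreasing) function of class C¹, and set G(t) = ∫_{t0}^t g(τ) dτ. Then for every interval [α,β] ⊆ [t0,∞) and every real number ℓ > 0 it turns out that ∫_α^β g(τ)·sin²(ℓτ) dτ ≥ (1/2)(G(β) − G(α)) − (1/ℓ)·max{ g(α), g(β) }. -/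
/-!
Since `sin² (ℓτ) = (1 - cos (2ℓτ)) / 2`, it suffices to bound `∫ g(τ) cos (2ℓτ) dτ`.
Integrating by parts against `sin (2ℓτ) / (2ℓ)`, which is bounded by `1 / (2ℓ)`, the boundary
terms contribute at most `(g α + g β) / (2ℓ)` and the remaining integral at most
`∫ |g'| / (2ℓ) = |g β - g α| / (2ℓ)`, because `g'` has constant sign. The sum is
`max (g α) (g β) / ℓ`.
-/

open Real Set MeasureTheory Filter

section IntervalBounds

variable {u u' : ℝ → ℝ} {a b : ℝ}

lemma HasDerivAt.nonneg_of_monotoneOn_Icc (hu : MonotoneOn u (Icc a b)) {x : ℝ}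
    (hx : x ∈ Ioo a b) (hd : HasDerivAt u (u' x) x) : 0 ≤ u' x := by
  have hacc : AccPt x (𝓟 (Ioo a b)) := by
    simpa using (PerfectSpace.univ_preperfect x (mem_univ x)).nhds_inter (Ioo_mem_nhds hx.1 hx.2)
  exact hd.hasDerivWithinAt.nonneg_of_monotoneOn hacc (hu.mono Ioo_subset_Icc_self)

lemma integral_abs_deriv_eq_abs_sub_of_monotoneOn (hab : a ≤ b) (hu : ContinuousOn u (Icc a b))
    (hd : ∀ x ∈ Ioo a b, HasDerivAt u (u' x) x) (hu' : IntervalIntegrable u' volume a b)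
    (hmono : MonotoneOn u (Icc a b)) :
    ∫ x in a..b, |u' x| = |u b - u a| := by
  rw [intervalIntegral.integral_congr_Ioo_of_le hab
      (fun x hx ↦ abs_of_nonneg ((hd x hx).nonneg_of_monotoneOn_Icc hmono hx)),
    intervalIntegral.integral_eq_sub_of_hasDerivAt_of_le hab hu hd hu',
    abs_of_nonneg (sub_nonneg.2 (hmono (left_mem_Icc.2 hab) (right_mem_Icc.2 hab) hab))]

lemma integral_abs_deriv_eq_abs_sub_of_monotoneOn_or_antitoneOn (hab : a ≤ b)
    (hu : ContinuousOn u (Icc a b)) (hd : ∀ x ∈ Ioo a b, HasDerivAt u (u' x) x)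
    (hu' : IntervalIntegrable u' volume a b)
    (hmono : MonotoneOn u (Icc a b) ∨ AntitoneOn u (Icc a b)) :
    ∫ x in a..b, |u' x| = |u b - u a| := by
  rcases hmono with hmono | hanti
  · exact integral_abs_deriv_eq_abs_sub_of_monotoneOn hab hu hd hu' hmono
  · have := integral_abs_deriv_eq_abs_sub_of_monotoneOn hab hu.neg (fun x hx ↦ (hd x hx).neg)
      hu'.neg hanti.neg
    rw [abs_sub_comm]
    simpa only [Pi.neg_apply, abs_neg, neg_sub_neg] using this

lemma abs_integral_mul_deriv_le {v v' : ℝ → ℝ} {M : ℝ} (hab : a ≤ b)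
    (hu : ContinuousOn u (Icc a b)) (hud : ∀ x ∈ Ioo a b, HasDerivAt u (u' x) x)
    (hu' : IntervalIntegrable u' volume a b) (hv : ContinuousOn v (Icc a b))
    (hvd : ∀ x ∈ Ioo a b, HasDerivAt v (v' x) x) (hv' : IntervalIntegrable v' volume a b)
    (hM : ∀ x ∈ Icc a b, |v x| ≤ M) :
    |∫ x in a..b, u x * v' x| ≤ M * (|u a| + |u b| + ∫ x in a..b, |u' x|) := by
  rw [← uIcc_of_le hab] at hu hv
  have hparts : ∫ x in a..b, u x * v' x = u b * v b - u a * v a - ∫ x in a..b, u' x * v x := by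
    refine intervalIntegral.integral_mul_deriv_eq_deriv_mul_of_hasDerivAt hu hv ?_ ?_ hu' hv' <;>
      rwa [min_eq_left hab, max_eq_right hab]
  have hendpoint : ∀ x ∈ Icc a b, |u x * v x| ≤ M * |u x| := fun x hx ↦ by
    rw [abs_mul, mul_comm M]
    exact mul_le_mul_of_nonneg_left (hM x hx) (abs_nonneg _)
  have hbulk : |∫ x in a..b, u' x * v x| ≤ M * ∫ x in a..b, |u' x| := by
    rw [← intervalIntegral.integral_const_mul]
    refine (intervalIntegral.abs_integral_le_integral_abs hab).trans
      (intervalIntegral.integral_mono_on hab (hu'.mul_continuousOn hv).abs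
        (hu'.abs.const_mul M) fun x hx ↦ ?_)
    rw [abs_mul, mul_comm M]
    exact mul_le_mul_of_nonneg_left (hM x hx) (abs_nonneg _)
  calc |∫ x in a..b, u x * v' x|
      ≤ |u b * v b| + |u a * v a| + |∫ x in a..b, u' x * v x| := by
        rw [hparts]
        refine (abs_sub _ _).trans ?_
        gcongr
        exact abs_sub _ _
    _ ≤ M * |u b| + M * |u a| + M * ∫ x in a..b, |u' x| := by
        gcongr
        exacts [hendpoint b (right_mem_Icc.2 hab), hendpoint a (left_mem_Icc.2 hab)]
    _ = M * (|u a| + |u b| + ∫ x in a..b, |u' x|) := by ring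

lemma abs_integral_mul_cos_le (hab : a ≤ b) (hu : ContinuousOn u (Icc a b))
    (hud : ∀ x ∈ Ioo a b, HasDerivAt u (u' x) x) (hu' : IntervalIntegrable u' volume a b)
    (hmono : MonotoneOn u (Icc a b) ∨ AntitoneOn u (Icc a b)) {c : ℝ} (hc : c ≠ 0) :
    |∫ x in a..b, u x * cos (c * x)| ≤ (|u a| + |u b| + |u b - u a|) / |c| := by
  have hsin : ∀ x, HasDerivAt (fun y ↦ sin (c * y) / c) (cos (c * x)) x := fun x ↦ by
    simpa [hc] using ((hasDerivAt_id x).const_mul c).sin.div_const c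
  have hsin_le : ∀ x ∈ Icc a b, |sin (c * x) / c| ≤ |c|⁻¹ := fun x _ ↦ by
    rw [abs_div, div_eq_mul_inv]
    exact mul_le_of_le_one_left (inv_nonneg.2 (abs_nonneg c)) (abs_sin_le_one _)
  have := abs_integral_mul_deriv_le hab hu hud hu'
    (fun x _ ↦ (hsin x).continuousAt.continuousWithinAt) (fun x _ ↦ hsin x)
    ((by fun_prop : Continuous fun x ↦ cos (c * x)).intervalIntegrable a b) hsin_le
  rwa [integral_abs_deriv_eq_abs_sub_of_monotoneOn_or_antitoneOn hab hu hud hu' hmono,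
    inv_mul_eq_div] at this

end IntervalBounds

lemma integral_mul_sin_sq {f : ℝ → ℝ} {a b : ℝ} (hf : IntervalIntegrable f volume a b) (ℓ : ℝ) :
    ∫ x in a..b, f x * sin (ℓ * x) ^ 2 =
      (1 / 2) * (∫ x in a..b, f x) - (1 / 2) * ∫ x in a..b, f x * cos (2 * ℓ * x) := by
  have hcos : IntervalIntegrable (fun x ↦ f x * cos (2 * ℓ * x)) volume a b :=
    hf.mul_continuousOn (by fun_prop : Continuous fun x ↦ cos (2 * ℓ * x)).continuousOn
  rw [← intervalIntegral.integral_const_mul, ← intervalIntegral.integral_const_mul,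
    ← intervalIntegral.integral_sub (hf.const_mul _) (hcos.const_mul _)]
  congr 1 with x
  rw [sin_sq_eq_half_sub, mul_assoc 2 ℓ x]
  ring

theorem oscillating_integral_estimate
    (t0 : ℝ) (g g' : ℝ → ℝ)
    (hg_nonneg : ∀ t ∈ Ici t0, 0 ≤ g t)
    (hg_mono : MonotoneOn g (Ici t0) ∨ AntitoneOn g (Ici t0))
    (hg1 : ∀ t ∈ Ici t0, HasDerivWithinAt g (g' t) (Ici t0) t)
    (hg1cont : ContinuousOn g' (Ici t0)) :
    ∀ α β ℓ : ℝ, t0 ≤ α → α ≤ β → 0 < ℓ →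
      (1 / 2) * ((∫ τ in t0..β, g τ) - ∫ τ in t0..α, g τ) -
          (1 / ℓ) * max (g α) (g β) ≤
        ∫ τ in α..β, g τ * (Real.sin (ℓ * τ)) ^ 2 := by
  intro α β ℓ hα hαβ hℓ
  have hgc : ContinuousOn g (Ici t0) := fun x hx ↦ (hg1 x hx).continuousWithinAt
  have hsub : Icc α β ⊆ Ici t0 := fun x hx ↦ hα.trans hx.1
  have hg_int : ∀ s ∈ Ici t0, IntervalIntegrable g volume t0 s := fun s hs ↦
    (hgc.mono Icc_subset_Ici_self).intervalIntegrable_of_Icc hs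
  have hderiv : ∀ x ∈ Ioo α β, HasDerivAt g (g' x) x := fun x hx ↦
    (hg1 x (hsub (Ioo_subset_Icc_self hx))).hasDerivAt (Ici_mem_nhds (hα.trans_lt hx.1))
  have hcos := abs_integral_mul_cos_le hαβ (hgc.mono hsub) hderiv
    ((hg1cont.mono hsub).intervalIntegrable_of_Icc hαβ)
    (hg_mono.imp (·.mono hsub) (·.mono hsub)) (c := 2 * ℓ) (by positivity)
  rw [abs_of_nonneg (hg_nonneg α hα), abs_of_nonneg (hg_nonneg β (hα.trans hαβ)),
    abs_of_pos (by positivity : (0 : ℝ) < 2 * ℓ)] at hcos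
  rw [intervalIntegral.integral_interval_sub_left (hg_int β (hα.trans hαβ)) (hg_int α hα),
    integral_mul_sin_sq ((hgc.mono hsub).intervalIntegrable_of_Icc hαβ)]
  have hsum : g α + g β + |g β - g α| = 2 * max (g α) (g β) := by
    rw [← max_sub_min_eq_abs]
    linarith [min_add_max (g α) (g β)]
  rw [hsum, mul_div_mul_left _ _ two_ne_zero] at hcos
  have hmax : 0 ≤ max (g α) (g β) / ℓ :=
    div_nonneg ((hg_nonneg α hα).trans (le_max_left _ _)) hℓ.le
  rw [one_div_mul_eq_div ℓ]
  linarith [(le_abs_self _).trans hcos]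
end

section
/- (Fundamental DGCS observation.) Let t0, m > 0 and λ > 0 be real numbers, and let ε : [t0,∞) → ℝ be a function of class C¹. Define w(t) = (1/(mλ))·sin(mλt)·exp( (1/(8m²))·∫_{t0}^t ε(s)·sin²(mλs) ds ) and c(t) = m² − (ε(t)/(4mλ))·sin(2mλt) − (ε'(t)/(8m²λ²))·sin²(mλt) − (ε(t)²/(64m⁴λ²))·sin⁴(mλt). Then w is a solution of the ordinary differential equation w''(t) + λ²·c(t)·w(t) = 0 for all t ≥ t0. -/
open Real Set MeasureTheory

/-!
Write `w = sin (mλt) · exp φ / (mλ)` with `φ' = ε sin² (mλt) / (8m²)`. Then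
`w' = exp φ · (cos (mλt) + ε sin³ (mλt) / (8m³λ))`, and differentiating once more, the terms of
`w''` are exactly `-λ² w` times the four terms of `c`: the `sin (2mλt)` term collects the
`cos · sin²` contributions `1/8 + 3/8`, while `ε'` and `ε²` enter only through the derivative of
the correction `ε sin³ / (8m³λ)` and through `φ'`.
-/

theorem hasDerivWithinAt_integral_Ici {E : Type*} [NormedAddCommGroup E] [NormedSpace ℝ E]
    [CompleteSpace E] {g : ℝ → E} {a t : ℝ} (hg : ContinuousOn g (Ici a)) (ht : t ∈ Ici a) :
    HasDerivWithinAt (fun u => ∫ s in a..u, g s) (g t) (Ici a) t := by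
  have hint : IntervalIntegrable g volume a t :=
    (hg.mono (uIcc_of_le (mem_Ici.mp ht) ▸ Icc_subset_Ici_self)).intervalIntegrable
  rcases eq_or_lt_of_le (mem_Ici.mp ht) with rfl | hlt
  · exact intervalIntegral.integral_hasDerivWithinAt_right hint
      ((hg.mono Ioi_subset_Ici_self).stronglyMeasurableAtFilter_nhdsWithin measurableSet_Ioi a)
      ((hg a self_mem_Ici).mono Ioi_subset_Ici_self)
  · have hnhds : Ici a ∈ nhds t := Ici_mem_nhds hlt
    exact (intervalIntegral.integral_hasDerivAt_right hint
      ⟨Ici a, hnhds, hg.aestronglyMeasurable measurableSet_Ici⟩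
      (hg.continuousAt hnhds)).hasDerivWithinAt

theorem hasDerivAt_sin_mul (k t : ℝ) :
    HasDerivAt (fun u => sin (k * u)) (cos (k * t) * k) t := by
  simpa using ((hasDerivAt_id t).const_mul k).sin

theorem hasDerivAt_cos_mul (k t : ℝ) :
    HasDerivAt (fun u => cos (k * u)) (-sin (k * t) * k) t := by
  simpa using ((hasDerivAt_id t).const_mul k).cos

section DGCS

variable {m lam : ℝ} {ε ε' φ : ℝ → ℝ} {s : Set ℝ} {t : ℝ}

theorem dgcs_hasDerivWithinAt_first (hm : m ≠ 0) (hlam : lam ≠ 0)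
    (hφ : HasDerivWithinAt φ (ε t * sin (m * lam * t) ^ 2 / (8 * m ^ 2)) s t) :
    HasDerivWithinAt (fun u => 1 / (m * lam) * sin (m * lam * u) * exp (φ u))
      (exp (φ t) * (cos (m * lam * t) + ε t * sin (m * lam * t) ^ 3 / (8 * m ^ 3 * lam))) s t := by
  have hsin : HasDerivWithinAt (fun u => 1 / (m * lam) * sin (m * lam * u))
      (1 / (m * lam) * (cos (m * lam * t) * (m * lam))) s t :=
    ((hasDerivAt_sin_mul (m * lam) t).const_mul (1 / (m * lam))).hasDerivWithinAt
  exact (hsin.mul hφ.exp).congr_deriv (by field_simp)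

theorem dgcs_hasDerivWithinAt_second (hm : m ≠ 0) (hlam : lam ≠ 0)
    (hε : HasDerivWithinAt ε (ε' t) s t)
    (hφ : HasDerivWithinAt φ (ε t * sin (m * lam * t) ^ 2 / (8 * m ^ 2)) s t) :
    HasDerivWithinAt
      (fun u => exp (φ u) * (cos (m * lam * u) + ε u * sin (m * lam * u) ^ 3 / (8 * m ^ 3 * lam)))
      (-(lam ^ 2 * (m ^ 2 -
        ε t / (4 * m * lam) * sin (2 * m * lam * t) -
        ε' t / (8 * m ^ 2 * lam ^ 2) * sin (m * lam * t) ^ 2 -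
        ε t ^ 2 / (64 * m ^ 4 * lam ^ 2) * sin (m * lam * t) ^ 4) *
        (1 / (m * lam) * sin (m * lam * t) * exp (φ t)))) s t := by
  have hcorr : HasDerivWithinAt
      (fun u => cos (m * lam * u) + ε u * sin (m * lam * u) ^ 3 / (8 * m ^ 3 * lam))
      (-sin (m * lam * t) * (m * lam) + (ε' t * sin (m * lam * t) ^ 3 +
        ε t * ((3 : ℕ) * sin (m * lam * t) ^ 2 * (cos (m * lam * t) * (m * lam)))) /
          (8 * m ^ 3 * lam)) s t :=
    (hasDerivAt_cos_mul (m * lam) t).hasDerivWithinAt.add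
      ((hε.mul ((hasDerivAt_sin_mul (m * lam) t).hasDerivWithinAt.pow 3)).div_const
        (8 * m ^ 3 * lam))
  refine (hφ.exp.mul hcorr).congr_deriv ?_
  rw [show 2 * m * lam * t = 2 * (m * lam * t) by ring, sin_two_mul]
  field_simp
  ring

end DGCS

theorem DGCS_fundamental_observation_general
    (t0 m lam : ℝ) (hm : 0 < m) (hlam : 0 < lam)
    (ε ε' : ℝ → ℝ)
    (hε : ∀ t ∈ Ici t0, HasDerivWithinAt ε (ε' t) (Ici t0) t)
    (w c : ℝ → ℝ)
    (hw : ∀ t, w t = 1 / (m * lam) * Real.sin (m * lam * t) *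
      Real.exp (1 / (8 * m ^ 2) *
        ∫ s in t0..t, ε s * (Real.sin (m * lam * s)) ^ 2))
    (hc : ∀ t, c t = m ^ 2 -
      ε t / (4 * m * lam) * Real.sin (2 * m * lam * t) -
      ε' t / (8 * m ^ 2 * lam ^ 2) * (Real.sin (m * lam * t)) ^ 2 -
      (ε t) ^ 2 / (64 * m ^ 4 * lam ^ 2) * (Real.sin (m * lam * t)) ^ 4) :
    ∃ w' : ℝ → ℝ,
      (∀ t ∈ Ici t0, HasDerivWithinAt w (w' t) (Ici t0) t) ∧
      (∀ t ∈ Ici t0, HasDerivWithinAt w' (-(lam ^ 2 * c t * w t)) (Ici t0) t) := by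
  set φ : ℝ → ℝ := fun t => 1 / (8 * m ^ 2) * ∫ s in t0..t, ε s * sin (m * lam * s) ^ 2
  have hεcont : ContinuousOn ε (Ici t0) := fun t ht => (hε t ht).continuousWithinAt
  have hintegrand : ContinuousOn (fun s => ε s * sin (m * lam * s) ^ 2) (Ici t0) :=
    hεcont.mul (by fun_prop)
  have hφ (t : ℝ) (ht : t ∈ Ici t0) :
      HasDerivWithinAt φ (ε t * sin (m * lam * t) ^ 2 / (8 * m ^ 2)) (Ici t0) t := ((hasDerivWithinAt_integral_Ici hintegrand ht).const_mul
      (1 / (8 * m ^ 2))).congr_deriv (by ring)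
  obtain rfl : w = fun t => 1 / (m * lam) * sin (m * lam * t) * exp (φ t) := funext hw
  obtain rfl : c = _ := funext hc
  exact ⟨_, fun t ht => dgcs_hasDerivWithinAt_first hm.ne' hlam.ne' (hφ t ht),
    fun t ht => dgcs_hasDerivWithinAt_second hm.ne' hlam.ne' (hε t ht) (hφ t ht)⟩

theorem DGCS_fundamental_observation
    (t0 m lam : ℝ) (hm : 0 < m) (hlam : 0 < lam)
    (ε ε' : ℝ → ℝ)
    (hε : ∀ t ∈ Ici t0, HasDerivWithinAt ε (ε' t) (Ici t0) t)
    (hε'cont : ContinuousOn ε' (Ici t0))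
    (w c : ℝ → ℝ)
    (hw : ∀ t, w t = 1 / (m * lam) * Real.sin (m * lam * t) *
      Real.exp (1 / (8 * m ^ 2) *
        ∫ s in t0..t, ε s * (Real.sin (m * lam * s)) ^ 2))
    (hc : ∀ t, c t = m ^ 2 -
      ε t / (4 * m * lam) * Real.sin (2 * m * lam * t) -
      ε' t / (8 * m ^ 2 * lam ^ 2) * (Real.sin (m * lam * t)) ^ 2 -
      (ε t) ^ 2 / (64 * m ^ 4 * lam ^ 2) * (Real.sin (m * lam * t)) ^ 4) :
    ∃ w' : ℝ → ℝ,
      (∀ t ∈ Ici t0, HasDerivWithinAt w (w' t) (Ici t0) t) ∧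
      (∀ t ∈ Ici t0, HasDerivWithinAt w' (-(lam ^ 2 * c t * w t)) (Ici t0) t) :=
  DGCS_fundamental_observation_general t0 m lam hm hlam ε ε' hε w c hw hc
end

section
/- (Failure of GEC without stabilization.) Define, for t ≥ 1, w(t) = sin(t)·exp( (1/8)·∫_1^t (sin²τ)/τ dτ ) and c(t) = 1 − sin(2t)/(4t) + sin²(t)/(8t²) − sin⁴(t)/(64t²). Then w''(t) + c(t)·w(t) = 0 for all t ≥ 1, and moreover there exists a constant κ > 0 such that w'(t)² + w(t)² ≥ κ·t^{1/8} for all t ≥ 1; in particular the energy of this solution is unbounded as t → +∞. -/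
/-!
Differentiating `w = sin t · A t` with `A t = exp (⅛ ∫₁ᵗ sin² τ / τ dτ)` gives
`w' = A t · (cos t + sin³ t / (8t))`, and differentiating once more gives `w'' = -c w`.
The energy `w'² + w²` equals `A² · ((cos t + δ)² + sin² t)` with `|δ| ≤ 1/8`, so it is at
least `¾ A²`.
Since `sin² τ = (1 - cos 2τ) / 2` and `cos 2τ / τ` has a bounded primitive up to an `O(τ⁻²)`
error, `∫₁ᵗ sin² τ / τ dτ ≥ ½ log t - ½`, whence `A² ≥ e^{-1/8} t^{1/8}`.
-/

open Real Set MeasureTheory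

noncomputable def sinSqDivIntegral (t : ℝ) : ℝ := ∫ τ in (1 : ℝ)..t, sin τ ^ 2 / τ

lemma hasDerivAt_sinSqDivIntegral {t : ℝ} (ht : 0 < t) :
    HasDerivAt sinSqDivIntegral (sin t ^ 2 / t) t := by
  have hcont : ContinuousOn (fun τ : ℝ => sin τ ^ 2 / τ) (Ioi 0) :=
    (continuous_sin.pow 2).continuousOn.div continuousOn_id fun _ hx => hx.ne'
  have hsub : uIcc 1 t ⊆ Ioi 0 := fun x hx => (lt_min one_pos ht).trans_le hx.1
  exact intervalIntegral.integral_hasDerivAt_right ((hcont.mono hsub).intervalIntegrable)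
    (hcont.stronglyMeasurableAtFilter isOpen_Ioi t ht) (hcont.continuousAt (Ioi_mem_nhds ht))

noncomputable def sinSqDivIntegralMinorant (t : ℝ) : ℝ :=
  log t / 2 + (1 - sin (2 * t)) / (4 * t)

lemma hasDerivAt_sinSqDivIntegralMinorant {t : ℝ} (ht : 0 < t) :
    HasDerivAt sinSqDivIntegralMinorant (sin t ^ 2 / t - (1 - sin (2 * t)) / (4 * t ^ 2)) t := by
  have h2 : HasDerivAt (fun s : ℝ => 2 * s) 2 t := by simpa using (hasDerivAt_id t).const_mul 2
  have h4 : HasDerivAt (fun s : ℝ => 4 * s) 4 t := by simpa using (hasDerivAt_id t).const_mul 4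
  have hsin := ((hasDerivAt_sin (2 * t)).comp t h2).const_sub 1
  refine (((hasDerivAt_log ht.ne').div_const 2).add (hsin.div h4 (by positivity))).congr_deriv ?_
  rw [Function.comp_apply, cos_two_mul, cos_sq']
  field_simp
  ring

lemma monotoneOn_sinSqDivIntegral_sub_minorant :
    MonotoneOn (fun t => sinSqDivIntegral t - sinSqDivIntegralMinorant t) (Ioi 0) := by
  have hderiv : ∀ t ∈ Ioi (0 : ℝ), HasDerivAt
      (fun t => sinSqDivIntegral t - sinSqDivIntegralMinorant t)
      ((1 - sin (2 * t)) / (4 * t ^ 2)) t := fun t ht =>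
    ((hasDerivAt_sinSqDivIntegral ht).sub (hasDerivAt_sinSqDivIntegralMinorant ht)).congr_deriv
      (by ring)
  refine monotoneOn_of_deriv_nonneg (convex_Ioi 0)
    (fun t ht => (hderiv t ht).continuousAt.continuousWithinAt)
    (fun t ht => (hderiv t (interior_subset ht)).differentiableAt.differentiableWithinAt)
    fun t ht => ?_
  rw [interior_Ioi] at ht
  rw [(hderiv t ht).deriv]
  exact div_nonneg (by linarith [sin_le_one (2 * t)]) (by positivity)

lemma half_log_sub_half_le_sinSqDivIntegral {t : ℝ} (ht : 1 ≤ t) :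
    log t / 2 - 1 / 2 ≤ sinSqDivIntegral t := by
  have hmono := monotoneOn_sinSqDivIntegral_sub_minorant (mem_Ioi.2 one_pos)
    (mem_Ioi.2 (one_pos.trans_le ht)) ht
  have hat_one : sinSqDivIntegralMinorant 1 ≤ 1 / 2 := by
    have := neg_one_le_sin 2
    norm_num [sinSqDivIntegralMinorant]
    linarith
  have hat_t : log t / 2 ≤ sinSqDivIntegralMinorant t :=
    le_add_of_nonneg_right (div_nonneg (by linarith [sin_le_one (2 * t)]) (by positivity))
  have hzero : sinSqDivIntegral 1 = 0 := intervalIntegral.integral_same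
  simp only [hzero] at hmono
  linarith

noncomputable def amplitude (t : ℝ) : ℝ := exp (1 / 8 * sinSqDivIntegral t)

lemma hasDerivAt_amplitude {t : ℝ} (ht : 0 < t) :
    HasDerivAt amplitude (amplitude t * (sin t ^ 2 / (8 * t))) t :=
  (((hasDerivAt_sinSqDivIntegral ht).const_mul (1 / 8)).exp).congr_deriv (by
    rw [amplitude]; field_simp)

lemma rpow_mul_exp_le_amplitude_sq {t : ℝ} (ht : 1 ≤ t) :
    t ^ ((1 : ℝ) / 8) * exp (-(1 / 8)) ≤ amplitude t ^ 2 := by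
  rw [rpow_def_of_pos (one_pos.trans_le ht), ← exp_add, amplitude, sq, ← exp_add, exp_le_exp]
  linarith [half_log_sub_half_le_sinSqDivIntegral ht]

noncomputable def solution (t : ℝ) : ℝ := sin t * amplitude t

noncomputable def solutionDeriv (t : ℝ) : ℝ := amplitude t * (cos t + sin t ^ 3 / (8 * t))

noncomputable def coeff (t : ℝ) : ℝ :=
  1 - sin (2 * t) / (4 * t) + sin t ^ 2 / (8 * t ^ 2) - sin t ^ 4 / (64 * t ^ 2)

lemma hasDerivAt_solution {t : ℝ} (ht : 0 < t) : HasDerivAt solution (solutionDeriv t) t :=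
  ((hasDerivAt_sin t).mul (hasDerivAt_amplitude ht)).congr_deriv (by
    rw [solutionDeriv]; field_simp)

lemma hasDerivAt_solutionDeriv {t : ℝ} (ht : 0 < t) :
    HasDerivAt solutionDeriv (-(coeff t * solution t)) t := by
  have hsin3 : HasDerivAt (fun s => sin s ^ 3) (3 * sin t ^ 2 * cos t) t := by
    simpa using (hasDerivAt_sin t).fun_pow 3
  have h8 : HasDerivAt (fun s : ℝ => 8 * s) 8 t := by simpa using (hasDerivAt_id t).const_mul 8
  refine ((hasDerivAt_amplitude ht).mul
    ((hasDerivAt_cos t).fun_add (hsin3.fun_div h8 (by positivity)))).congr_deriv ?_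
  rw [coeff, solution, sin_two_mul]
  field_simp
  ring

lemma three_quarters_le_sq_cos_add_add_sq_sin (t : ℝ) {δ : ℝ} (hδ : |δ| ≤ 1 / 8) :
    3 / 4 ≤ (cos t + δ) ^ 2 + sin t ^ 2 := by
  have hcos : |2 * δ * cos t| ≤ 1 / 4 := by
    rw [abs_mul, abs_mul, abs_two]
    nlinarith [abs_cos_le_one t, abs_nonneg δ, abs_nonneg (cos t)]
  nlinarith [sin_sq_add_cos_sq t, neg_abs_le (2 * δ * cos t), sq_nonneg δ]

lemma mul_rpow_le_solutionDeriv_sq_add_solution_sq {t : ℝ} (ht : 1 ≤ t) :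
    3 / 4 * exp (-(1 / 8)) * t ^ ((1 : ℝ) / 8) ≤ solutionDeriv t ^ 2 + solution t ^ 2 := by
  have hδ : |sin t ^ 3 / (8 * t)| ≤ 1 / 8 := by
    rw [abs_div, abs_pow, abs_of_pos (by positivity : (0 : ℝ) < 8 * t),
      div_le_div_iff₀ (by positivity) (by norm_num)]
    nlinarith [pow_le_one₀ (abs_nonneg _) (abs_sin_le_one t) (n := 3)]
  calc 3 / 4 * exp (-(1 / 8)) * t ^ ((1 : ℝ) / 8)
      = 3 / 4 * (t ^ ((1 : ℝ) / 8) * exp (-(1 / 8))) := by ring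
    _ ≤ ((cos t + sin t ^ 3 / (8 * t)) ^ 2 + sin t ^ 2) * amplitude t ^ 2 :=
        mul_le_mul (three_quarters_le_sq_cos_add_add_sq_sin t hδ)
          (rpow_mul_exp_le_amplitude_sq ht) (by positivity) (by positivity)
    _ = solutionDeriv t ^ 2 + solution t ^ 2 := by rw [solutionDeriv, solution]; ring

theorem failure_of_GEC_without_stabilization
    (w c : ℝ → ℝ)
    (hw : ∀ t, w t = Real.sin t *
      Real.exp (1 / 8 * ∫ τ in (1 : ℝ)..t, (Real.sin τ) ^ 2 / τ))
    (hc : ∀ t, c t = 1 - Real.sin (2 * t) / (4 * t) +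
      (Real.sin t) ^ 2 / (8 * t ^ 2) - (Real.sin t) ^ 4 / (64 * t ^ 2)) :
    ∃ w' : ℝ → ℝ,
      (∀ t ∈ Ici (1 : ℝ), HasDerivWithinAt w (w' t) (Ici (1 : ℝ)) t) ∧
      (∀ t ∈ Ici (1 : ℝ), HasDerivWithinAt w' (-(c t * w t)) (Ici (1 : ℝ)) t) ∧
      ∃ κ : ℝ, 0 < κ ∧ ∀ t ≥ (1 : ℝ),
        κ * t ^ ((1 : ℝ) / 8) ≤ (w' t) ^ 2 + (w t) ^ 2 := by
  obtain rfl : w = solution := funext hw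
  obtain rfl : c = coeff := funext hc
  refine ⟨solutionDeriv, fun t ht => ?_, fun t ht => ?_,
    3 / 4 * exp (-(1 / 8)), by positivity,
    fun _ ht => mul_rpow_le_solutionDeriv_sq_add_solution_sq ht⟩
  · exact (hasDerivAt_solution (one_pos.trans_le ht)).hasDerivWithinAt
  · exact (hasDerivAt_solutionDeriv (one_pos.trans_le ht)).hasDerivWithinAt
end
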